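/- arXiv:2304.12997 — 2 statements merged into one kernel-verified Lean document; each statement's English description precedes it below -/
import Mathlib

section
/- For a nonzero nilpotent matrix T in M_n(ℂ), the range of T* is not contained in the range of T, and the range of T is not contained in the range of T*. -/
/-!
A nonzero nilpotent `T` has a nonzero vector in `range T ∩ ker T`, whereas
`range Tᴴ ∩ ker T = 0` because `⟪Tᴴ w, Tᴴ w⟫ = ⟪w, T Tᴴ w⟫`. Hence `range Tᴴ ≠ range T`, and as the
two ranges have the same dimension, neither contains the other.
-/

open Matrix ComplexOrder

namespace Module.End

variable {R M : Type*} [Semiring R] [AddCommMonoid M] [Module R M]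

/-- If `f ^ k = 0` with `k` minimal, then `f ^ (k - 1)` is nonzero and its image lies in both
`range f` and `ker f`. -/
theorem range_inf_ker_ne_bot_of_isNilpotent {f : Module.End R M} (hf : IsNilpotent f)
    (hf0 : f ≠ 0) : LinearMap.range f ⊓ LinearMap.ker f ≠ ⊥ := by
  have : Nontrivial (Module.End R M) := ⟨⟨f, 0, hf0⟩⟩
  set k := nilpotencyClass f
  have hk : 2 ≤ k := by
    have hpos : 0 < k := pos_nilpotencyClass_iff.mpr hf
    have hne : k ≠ 1 := fun h ↦ hf0 (nilpotencyClass_eq_one.mp h)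
    omega
  obtain ⟨x, hx⟩ : ∃ x, (f ^ (k - 1)) x ≠ 0 := by
    by_contra! h
    exact pow_pred_nilpotencyClass hf (LinearMap.ext h)
  refine (Submodule.ne_bot_iff _).mpr ⟨(f ^ (k - 1)) x, ⟨?_, ?_⟩, hx⟩
  · refine ⟨(f ^ (k - 2)) x, ?_⟩
    rw [← Module.End.mul_apply, ← pow_succ', show k - 2 + 1 = k - 1 by omega]
  · change f ((f ^ (k - 1)) x) = 0
    rw [← Module.End.mul_apply, ← pow_succ', Nat.sub_add_cancel (by omega),
      pow_nilpotencyClass hf, LinearMap.zero_apply]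

end Module.End

namespace Matrix

variable {m n K : Type*} [Fintype m] [Fintype n] [CommRing K] [StarRing K] [PartialOrder K]
  [StarOrderedRing K] [NoZeroDivisors K]

theorem range_mulVecLin_conjTranspose_inf_ker_eq_bot (A : Matrix m n K) :
    LinearMap.range Aᴴ.mulVecLin ⊓ LinearMap.ker A.mulVecLin = ⊥ := by
  refine (Submodule.eq_bot_iff _).mpr ?_
  rintro v ⟨⟨w, rfl⟩, hv⟩
  have hv : A *ᵥ (Aᴴ *ᵥ w) = 0 := hv
  refine dotProduct_star_self_eq_zero.mp ?_
  calc star (Aᴴ *ᵥ w) ⬝ᵥ (Aᴴ *ᵥ w) = star w ⬝ᵥ (A *ᵥ (Aᴴ *ᵥ w)) := by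
        rw [star_mulVec, conjTranspose_conjTranspose]
        exact (dotProduct_mulVec _ _ _).symm
    _ = 0 := by rw [hv, dotProduct_zero]

theorem range_mulVecLin_conjTranspose_ne_of_isNilpotent [DecidableEq n] {T : Matrix n n K} (hT : IsNilpotent T) (hT0 : T ≠ 0) :
    LinearMap.range Tᴴ.mulVecLin ≠ LinearMap.range T.mulVecLin := by
  intro h
  have hnil : IsNilpotent T.mulVecLin := hT.map (toLinAlgEquiv' : Matrix n n K ≃ₐ[K] _)
  have hne : T.mulVecLin ≠ 0 := fun h0 ↦ hT0 (toLin'.injective (h0.trans toLin'.map_zero.symm))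
  exact Module.End.range_inf_ker_ne_bot_of_isNilpotent hnil hne
    (h ▸ range_mulVecLin_conjTranspose_inf_ker_eq_bot T)

end Matrix

theorem range_not_subset_of_nilpotent
    (n : ℕ) (T : Matrix (Fin n) (Fin n) ℂ)
    (hT0 : T ≠ 0) (hTnil : IsNilpotent T) :
    ¬ (LinearMap.range Tᴴ.mulVecLin ≤ LinearMap.range T.mulVecLin) ∧
    ¬ (LinearMap.range T.mulVecLin ≤ LinearMap.range Tᴴ.mulVecLin) := by
  have hne := range_mulVecLin_conjTranspose_ne_of_isNilpotent hTnil hT0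
  have hrank : Tᴴ.rank = T.rank := rank_conjTranspose T
  exact ⟨fun hle ↦ hne (Submodule.eq_of_le_of_finrank_eq hle hrank),
    fun hle ↦ hne (Submodule.eq_of_le_of_finrank_eq hle hrank.symm).symm⟩
end

section
/- Let T = I + W* ∈ M_N(ℂ) where W e_i = (1/λ̄) e_{i+1} (1 ≤ i ≤ N−1), W e_N = 0, λ ≠ 0, N ≥ 2. For any n, m ≥ 1, the (1,1) entry of T^n (T*)^m equals 1 + nm|λ|^{−2} plus a nonnegative number; in particular it is ≥ 1 + nm|λ|^{−2}. -/
/-!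
`W*` is the superdiagonal shift with weight `1/λ`, so multiplying a row vector on the right by
`T = I + W*` adds to it a copy of itself shifted one place and scaled by `1/λ`. Starting from
row `1` of `I`, which is `e₁ᵀ`, row `1` of `T ^ k` has `(k choose p) λ^{-p}` in column
`p + 1`, and the `(1,1)` entry of `T ^ n (T*) ^ m = T ^ n (T ^ m)*` is
`∑ₚ (n choose p) (m choose p) |λ|^{-2p}`, a sum of nonnegative reals whose first two terms are
`1` and `nm|λ|^{-2}`.
-/

open Matrix Finset

namespace Matrix

variable {R : Type*} {N : ℕ}

def superdiagShift [Zero R] (c : R) : Matrix (Fin N) (Fin N) R :=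
  of fun i j => if (j : ℕ) = i + 1 then c else 0

theorem conjTranspose_eq_superdiagShift [AddMonoid R] [StarAddMonoid R]
    {W : Matrix (Fin N) (Fin N) R} {d : R}
    (hW : ∀ i j : Fin N, W i j = if (i : ℕ) = j + 1 then d else 0) :
    Wᴴ = superdiagShift (star d) := by
  ext i j
  rw [conjTranspose_apply, hW, superdiagShift, of_apply]
  split_ifs <;> simp

section Semiring

variable [NonUnitalNonAssocSemiring R] (A : Matrix (Fin N) (Fin N) R) (c : R) (i : Fin N)

theorem mul_superdiagShift_apply_zero (h : 0 < N) :
    (A * superdiagShift (N := N) c) i ⟨0, h⟩ = 0 := by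
  rw [mul_apply]
  exact sum_eq_zero fun q _ => by simp [superdiagShift]

theorem mul_superdiagShift_apply_succ {j : ℕ} (h : j + 1 < N) :
    (A * superdiagShift (N := N) c) i ⟨j + 1, h⟩ = A i ⟨j, by omega⟩ * c := by
  rw [mul_apply, sum_eq_single ⟨j, by omega⟩]
  · simp [superdiagShift]
  · intro q _ hq
    have : j ≠ q := fun hjq => hq (Fin.ext hjq.symm)
    simp [superdiagShift, this]
  · simp

end Semiring

theorem one_add_superdiagShift_pow_apply_zero [CommSemiring R] (c : R) (h : 0 < N) (k : ℕ)
    (p : Fin N) : ((1 + superdiagShift c) ^ k) ⟨0, h⟩ p = k.choose p * c ^ (p : ℕ) := by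
  induction k generalizing p with
  | zero => obtain ⟨_ | j, hj⟩ := p <;> simp
  | succ k ih =>
    rw [pow_succ, mul_add, mul_one, add_apply]
    obtain ⟨_ | j, hj⟩ := p
    · simp [mul_superdiagShift_apply_zero _ c _ h, ih]
    · rw [mul_superdiagShift_apply_succ, ih, ih, Nat.choose_succ_succ']
      push_cast
      ring

end Matrix

theorem one_add_mul_le_sum_choose_mul_choose_pow {R : Type*} [Semiring R] [PartialOrder R]
    [IsOrderedRing R] {N : ℕ} (hN : 2 ≤ N) {x : R} (hx : 0 ≤ x) (n m : ℕ) :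
    1 + n * m * x ≤ ∑ p ∈ range N, (n.choose p * m.choose p : R) * x ^ p := by
  calc 1 + n * m * x = ∑ p ∈ range 2, (n.choose p * m.choose p : R) * x ^ p := by
        simp [sum_range_succ]
    _ ≤ _ := sum_le_sum_of_subset_of_nonneg (range_mono hN) fun p _ _ => by positivity

theorem entry_one_one_lower_bound (N : ℕ) (hN : 2 ≤ N) (lam : ℂ)
    (W : Matrix (Fin N) (Fin N) ℂ)
    (hW : ∀ i j : Fin N, W i j =
      if (i : ℕ) = (j : ℕ) + 1 then 1 / (starRingEnd ℂ) lam else 0)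
    (T : Matrix (Fin N) (Fin N) ℂ) (hT : T = 1 + Wᴴ)
    (n m : ℕ) :
    ∃ r : ℝ, (T ^ n * (Tᴴ) ^ m) ⟨0, by omega⟩ ⟨0, by omega⟩ = (r : ℂ) ∧
      1 + (n * m : ℝ) / ‖lam‖ ^ 2 ≤ r := by
  have hT' : T = 1 + superdiagShift lam⁻¹ := by
    simpa [conjTranspose_eq_superdiagShift hW] using hT
  have hrow := one_add_superdiagShift_pow_apply_zero lam⁻¹ (by omega : 0 < N)
  refine ⟨∑ p ∈ range N, (n.choose p * m.choose p : ℝ) * (‖lam‖ ^ 2)⁻¹ ^ p, ?_, ?_⟩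
  · rw [← conjTranspose_pow, mul_apply, hT', ← Fin.sum_univ_eq_sum_range]
    push_cast
    refine sum_congr rfl fun p _ => ?_
    rw [conjTranspose_apply, hrow, hrow, Complex.star_def, map_mul, map_natCast, map_pow,
      mul_mul_mul_comm, ← mul_pow, Complex.mul_conj', norm_inv, Complex.ofReal_inv, inv_pow,
      inv_pow]
  · calc 1 + (n * m : ℝ) / ‖lam‖ ^ 2 = 1 + n * m * (‖lam‖ ^ 2)⁻¹ := by ring
      _ ≤ _ := one_add_mul_le_sum_choose_mul_choose_pow hN (by positivity) n m
end
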